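/- In the θ-deformed 4-sphere algebra O(S^4_θ), the braided derivations T_μ satisfy the bracket relations [T_μ, T_ν] = b_μ T_ν − λ^{2μ∧ν} b_ν T_μ, where [T_μ,T_ν] = T_μ∘T_ν − λ^{2μ∧ν} T_ν∘T_μ is the braided commutator and b_μ T_ν denotes the left O(S^4_θ)-module action on derivations. -/
import Mathlib


/-!
STATEMENT 4: in the θ-deformed 4-sphere algebra `O(S^4_θ)`, the braided
derivations `T_μ` satisfy the bracket relations
`[T_μ, T_ν] = b_μ T_ν − λ^{2μ∧ν} b_ν T_μ`, where
`[T_μ,T_ν] = T_μ∘T_ν − λ^{2μ∧ν} T_ν∘T_μ` is the braided commutator and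
`b_μ T_ν` denotes the left `O(S^4_θ)`-module action on derivations.

`O(S^4_θ)` is modelled as a `ℂ`-algebra `A`, graded by the torus weight lattice
`ℤ × ℤ`, generated by elements `b_μ`, `μ ∈ V = {(0,0),(±1,0),(0,±1)}`, with
`b_{−μ} = b_μ*`, relations `b_μ ∙ b_ν = λ^{2μ∧ν} b_ν ∙ b_μ` (the scalar
`λ^{2μ∧ν} = q θ μ ν` below, `λ = e^{−πiθ}`, `μ∧ν = μ₁ν₂ − μ₂ν₁`) and sphere
relation `Σ_μ b_μ* ∙ b_μ = Σ_μ b_{−μ} ∙ b_μ = 1`.  The braided derivations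
`T_μ` are given on generators by `T_μ(b_ν) = δ_{μν*} − b_μ ∙ b_ν` and extended
via the braided Leibniz rule
`T_μ(x ∙ y) = T_μ(x) ∙ y + λ^{2μ∧m} x ∙ T_μ(y)` for `x` of weight `m`.
-/

noncomputable section

open scoped BigOperators

namespace Statement4

/-- the five weights `{(0,0),(±1,0),(0,±1)}` -/
def V : Finset (ℤ × ℤ) := {(0,0), (1,0), (-1,0), (0,1), (0,-1)}

/-- `μ∧ν := μ₁ν₂ − μ₂ν₁` -/
def wedge (p r : ℤ × ℤ) : ℤ := p.1 * r.2 - p.2 * r.1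

/-- `λ^{2 μ∧ν}` with `λ = e^{−πiθ}` -/
def q (θ : ℝ) (p r : ℤ × ℤ) : ℂ :=
  Complex.exp (-((Real.pi : ℂ) * Complex.I) * (θ : ℂ) * ((2 * wedge p r : ℤ) : ℂ))

open scoped Pointwise

lemma q_right_add (θ : ℝ) (p r s : ℤ × ℤ) : q θ p (r + s) = q θ p r * q θ p s := by
  rw [q, q, q, ← Complex.exp_add]
  congr 1
  have h : wedge p (r + s) = wedge p r + wedge p s := by
    simp only [wedge, Prod.fst_add, Prod.snd_add]; ring
  rw [h]; push_cast; ring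

lemma q_zero_right (θ : ℝ) (p : ℤ × ℤ) : q θ p 0 = 1 := by
  have h : wedge p 0 = 0 := by simp [wedge]
  simp [q, h]

lemma q_mul_symm (θ : ℝ) (p r : ℤ × ℤ) : q θ p r * q θ r p = 1 := by
  rw [q, q, ← Complex.exp_add, ← Complex.exp_zero]
  congr 1
  have h : wedge r p = - wedge p r := by simp only [wedge]; ring
  rw [h]; push_cast; ring

lemma q_neg_self (θ : ℝ) (p : ℤ × ℤ) : q θ p (-p) = 1 := by
  have h : wedge p (-p) = 0 := by simp only [wedge, Prod.fst_neg, Prod.snd_neg]; ring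
  simp [q, h]

theorem braided_bracket_of_S4_derivations
    (θ : ℝ)
    (A : Type*) [Ring A] [Algebra ℂ A]
    -- grading by torus weights
    (𝒜 : ℤ × ℤ → Submodule ℂ A) [GradedAlgebra 𝒜]
    -- generators `b_μ` of `O(S^4_θ)` (with `b_μ* = b_{−μ}`)
    (b : ℤ × ℤ → A)
    (hb : ∀ μ ∈ V, b μ ∈ 𝒜 μ)
    (hgen : Algebra.adjoin ℂ (b '' V) = ⊤)
    (hcomm : ∀ μ ∈ V, ∀ ν ∈ V, b μ * b ν = q θ μ ν • (b ν * b μ))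
    (hsph : ∑ μ ∈ V, b (-μ) * b μ = 1)
    -- the braided derivations `T_μ`
    (T : ℤ × ℤ → Module.End ℂ A)
    (hTval : ∀ μ ∈ V, ∀ ν ∈ V, T μ (b ν) = (if μ = -ν then 1 else 0) - b μ * b ν)
    (hTLeib : ∀ μ ∈ V, ∀ (m : ℤ × ℤ) (x y : A), x ∈ 𝒜 m →
      T μ (x * y) = T μ x * y + q θ μ m • (x * T μ y)) :
    -- `[T_μ, T_ν] = b_μ T_ν − λ^{2μ∧ν} b_ν T_μ`
    ∀ μ ∈ V, ∀ ν ∈ V,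
      T μ ∘ₗ T ν - q θ μ ν • (T ν ∘ₗ T μ)
        = (LinearMap.mulLeft ℂ (b μ)) ∘ₗ T ν
          - q θ μ ν • ((LinearMap.mulLeft ℂ (b ν)) ∘ₗ T μ) := by
  intro μ hμ ν hν
  have hQQ : q θ μ ν * q θ ν μ = 1 := q_mul_symm θ μ ν
  -- T ρ 1 = 0
  have hT1 : ∀ ρ ∈ V, T ρ 1 = 0 := by
    intro ρ hρ
    have h := hTLeib ρ hρ 0 1 1 (SetLike.one_mem_graded 𝒜)
    simp only [one_mul, mul_one, q_zero_right, one_smul] at h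
    exact (left_eq_add.mp h)
  -- generator values with scalar delta
  have hval : ∀ ρ ∈ V, ∀ τ ∈ V,
      T ρ (b τ) = (if ρ = -τ then (1:ℂ) else 0) • (1:A) - b ρ * b τ := by
    intro ρ hρ τ hτ
    rw [hTval ρ hρ τ hτ]
    split_ifs <;> simp
  have hdel : q θ μ ν * (if ν = -μ then (1:ℂ) else 0) = (if μ = -ν then (1:ℂ) else 0) := by
    by_cases h : ν = -μ
    · subst h
      simp [neg_neg, q_neg_self]
    · have h' : ¬ (μ = -ν) := by
        intro hh; exact h (by rw [hh, neg_neg])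
      simp [h, h']
  -- the set of good homogeneous elements
  set S : Set A := {x | ∃ m : ℤ × ℤ, x ∈ 𝒜 m ∧ T μ x ∈ 𝒜 (μ + m) ∧ T ν x ∈ 𝒜 (ν + m) ∧
      b μ * x = q θ μ m • (x * b μ) ∧ b ν * x = q θ ν m • (x * b ν) ∧
      T μ (T ν x) - q θ μ ν • T ν (T μ x) - (b μ * T ν x - q θ μ ν • (b ν * T μ x)) = 0}
    with hSdef
  -- 1 ∈ S
  have honeS : (1 : A) ∈ S := by
    refine ⟨0, (SetLike.one_mem_graded 𝒜), ?_, ?_, ?_, ?_, ?_⟩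
    · rw [hT1 μ hμ]; exact Submodule.zero_mem _
    · rw [hT1 ν hν]; exact Submodule.zero_mem _
    · rw [q_zero_right, one_smul, one_mul, mul_one]
    · rw [q_zero_right, one_smul, one_mul, mul_one]
    · simp [hT1 μ hμ, hT1 ν hν]
  -- generators ∈ S
  have hgenS : ∀ τ ∈ V, b τ ∈ S := by
    intro τ hτ
    refine ⟨τ, hb τ hτ, ?_, ?_, hcomm μ hμ τ hτ, hcomm ν hν τ hτ, ?_⟩
    · rw [hTval μ hμ τ hτ]
      by_cases h : μ = -τ
      · rw [if_pos h]
        have h0 : μ + τ = 0 := by rw [h]; ring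
        rw [h0]
        exact Submodule.sub_mem _ (SetLike.one_mem_graded 𝒜)
          (by
            have := SetLike.mul_mem_graded (hb μ hμ) (hb τ hτ)
            rwa [h0] at this)
      · rw [if_neg h, zero_sub]
        exact Submodule.neg_mem _ (SetLike.mul_mem_graded (hb μ hμ) (hb τ hτ))
    · rw [hTval ν hν τ hτ]
      by_cases h : ν = -τ
      · rw [if_pos h]
        have h0 : ν + τ = 0 := by rw [h]; ring
        rw [h0]
        exact Submodule.sub_mem _ (SetLike.one_mem_graded 𝒜)
          (by
            have := SetLike.mul_mem_graded (hb ν hν) (hb τ hτ)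
            rwa [h0] at this)
      · rw [if_neg h, zero_sub]
        exact Submodule.neg_mem _ (SetLike.mul_mem_graded (hb ν hν) (hb τ hτ))
    · -- the bracket computation on generators
      have e1 := hval ν hν τ hτ
      have e2 := hval μ hμ τ hτ
      have e3 := hval μ hμ ν hν
      have e4 := hval ν hν μ hμ
      have L1 : T μ (b ν * b τ) = T μ (b ν) * b τ + q θ μ ν • (b ν * T μ (b τ)) :=
        hTLeib μ hμ ν (b ν) (b τ) (hb ν hν)
      have L2 : T ν (b μ * b τ) = T ν (b μ) * b τ + q θ ν μ • (b μ * T ν (b τ)) :=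
        hTLeib ν hν μ (b μ) (b τ) (hb μ hμ)
      have hc : b ν * b μ = q θ ν μ • (b μ * b ν) := hcomm ν hν μ hμ
      simp only [e1, e2, map_sub, map_smul, hT1 μ hμ, hT1 ν hν, smul_zero, L1, L2, e3, e4]
      simp only [sub_mul, add_mul, smul_mul_assoc, mul_sub, mul_add, mul_smul_comm, smul_sub,
        smul_add, smul_smul, one_mul, mul_one, ← mul_assoc]
      simp only [hc, smul_mul_assoc, smul_smul, ← mul_assoc]
      match_scalars
      all_goals first
        | ring1
        | linear_combination hdel
        | linear_combination (2:ℂ) * hdel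
        | linear_combination -hdel
        | linear_combination (-2:ℂ) * hdel
        | linear_combination (-2:ℂ) * hQQ
        | linear_combination (2:ℂ) * hQQ
        | linear_combination (if ν = -τ then (1:ℂ) else 0) * hQQ
        | linear_combination (-(if ν = -τ then (1:ℂ) else 0)) * hQQ
  -- S closed under multiplication
  have hmulS : ∀ x ∈ S, ∀ y ∈ S, x * y ∈ S := by
    rintro x ⟨m, hx1, hx2, hx3, hx4, hx5, hx6⟩ y ⟨n, hy1, hy2, hy3, hy4, hy5, hy6⟩
    refine ⟨m + n, SetLike.mul_mem_graded hx1 hy1, ?_, ?_, ?_, ?_, ?_⟩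
    · rw [hTLeib μ hμ m x y hx1]
      refine Submodule.add_mem _ ?_ (Submodule.smul_mem _ _ ?_)
      · have := SetLike.mul_mem_graded hx2 hy1
        rwa [show μ + m + n = μ + (m + n) by ring] at this
      · have := SetLike.mul_mem_graded hx1 hy2
        rwa [show m + (μ + n) = μ + (m + n) by ring] at this
    · rw [hTLeib ν hν m x y hx1]
      refine Submodule.add_mem _ ?_ (Submodule.smul_mem _ _ ?_)
      · have := SetLike.mul_mem_graded hx3 hy1
        rwa [show ν + m + n = ν + (m + n) by ring] at this
      · have := SetLike.mul_mem_graded hx1 hy3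
        rwa [show m + (ν + n) = ν + (m + n) by ring] at this
    · rw [← mul_assoc, hx4, smul_mul_assoc, mul_assoc, hy4, mul_smul_comm, smul_smul,
        ← q_right_add, ← mul_assoc]
    · rw [← mul_assoc, hx5, smul_mul_assoc, mul_assoc, hy5, mul_smul_comm, smul_smul,
        ← q_right_add, ← mul_assoc]
    · -- the bracket computation on products
      have hDx' : T μ (T ν x) = q θ μ ν • T ν (T μ x) + (b μ * T ν x - q θ μ ν • (b ν * T μ x)) :=
        sub_eq_iff_eq_add'.mp (sub_eq_zero.mp hx6)
      have hDy' : T μ (T ν y) = q θ μ ν • T ν (T μ y) + (b μ * T ν y - q θ μ ν • (b ν * T μ y)) :=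
        sub_eq_iff_eq_add'.mp (sub_eq_zero.mp hy6)
      have L1 : T ν (x*y) = T ν x * y + q θ ν m • (x * T ν y) := hTLeib ν hν m x y hx1
      have L1' : T μ (x*y) = T μ x * y + q θ μ m • (x * T μ y) := hTLeib μ hμ m x y hx1
      have L2 : T μ (T ν x * y) = T μ (T ν x) * y + q θ μ (ν+m) • (T ν x * T μ y) :=
        hTLeib μ hμ (ν+m) (T ν x) y hx3
      have L3 : T μ (x * T ν y) = T μ x * T ν y + q θ μ m • (x * T μ (T ν y)) :=
        hTLeib μ hμ m x (T ν y) hx1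
      have L4 : T ν (T μ x * y) = T ν (T μ x) * y + q θ ν (μ+m) • (T μ x * T ν y) :=
        hTLeib ν hν (μ+m) (T μ x) y hx2
      have L5 : T ν (x * T μ y) = T ν x * T μ y + q θ ν m • (x * T ν (T μ y)) :=
        hTLeib ν hν m x (T μ y) hx1
      simp only [L1, L1', map_add, map_smul, L2, L3, L4, L5, hDx', hDy', q_right_add]
      simp only [mul_add, mul_sub, add_mul, sub_mul, smul_mul_assoc, mul_smul_comm, smul_add,
        smul_sub, smul_smul, ← mul_assoc]
      simp only [hx4, hx5, smul_mul_assoc, smul_smul, ← mul_assoc]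
      match_scalars
      all_goals first
        | ring1
        | linear_combination (q θ ν m) * hQQ
        | linear_combination (q θ μ m) * hQQ
        | linear_combination (-(q θ ν m)) * hQQ
        | linear_combination (-(q θ μ m)) * hQQ
        | linear_combination (q θ μ m * q θ ν m) * hQQ
        | linear_combination (-(q θ μ m * q θ ν m)) * hQQ
        | linear_combination hQQ
        | linear_combination -hQQ
  -- span of S is everything
  have hSS : S * S ⊆ S := by
    rintro z ⟨u, hu, v, hv, rfl⟩
    exact hmulS u hu v hv
  have hspan : ∀ a : A, a ∈ Submodule.span ℂ S := by
    have hMsub : ∃ Msub : Subalgebra ℂ A, (Msub : Set A) = (Submodule.span ℂ S : Set A) := by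
      refine ⟨{ carrier := (Submodule.span ℂ S : Set A)
                mul_mem' := ?_
                one_mem' := Submodule.subset_span honeS
                add_mem' := fun hu hv => Submodule.add_mem _ hu hv
                zero_mem' := Submodule.zero_mem _
                algebraMap_mem' := ?_ }, rfl⟩
      · intro u v hu hv
        have h := Submodule.mul_mem_mul hu hv
        rw [Submodule.span_mul_span] at h
        exact Submodule.span_le.mpr (hSS.trans Submodule.subset_span) h
      · intro r
        rw [Algebra.algebraMap_eq_smul_one]
        exact Submodule.smul_mem _ _ (Submodule.subset_span honeS)
    obtain ⟨Msub, hM⟩ := hMsub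
    have hle : Algebra.adjoin ℂ (b '' V) ≤ Msub := by
      apply Algebra.adjoin_le
      rintro _ ⟨τ, hτ, rfl⟩
      show b τ ∈ (Msub : Set A)
      rw [hM]
      exact Submodule.subset_span (hgenS τ hτ)
    intro a
    have ha : a ∈ Algebra.adjoin ℂ (b '' V) := by rw [hgen]; exact Algebra.mem_top
    have := hle ha
    rwa [← SetLike.mem_coe, hM] at this
  -- conclude pointwise
  have key : ∀ a : A, T μ (T ν a) - q θ μ ν • T ν (T μ a)
      - (b μ * T ν a - q θ μ ν • (b ν * T μ a)) = 0 := by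
    intro a
    refine Submodule.span_induction (p := fun x _ => T μ (T ν x) - q θ μ ν • T ν (T μ x)
        - (b μ * T ν x - q θ μ ν • (b ν * T μ x)) = 0) ?_ ?_ ?_ ?_ (hspan a)
    · rintro x ⟨m, h1, h2, h3, h4, h5, h6⟩
      exact h6
    · simp
    · intro u v hu hv pu pv
      have e : T μ (T ν (u + v)) - q θ μ ν • T ν (T μ (u + v))
          - (b μ * T ν (u + v) - q θ μ ν • (b ν * T μ (u + v)))
          = (T μ (T ν u) - q θ μ ν • T ν (T μ u) - (b μ * T ν u - q θ μ ν • (b ν * T μ u)))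
            + (T μ (T ν v) - q θ μ ν • T ν (T μ v)
              - (b μ * T ν v - q θ μ ν • (b ν * T μ v))) := by
        simp only [map_add, mul_add, smul_add]
        abel
      rw [e, pu, pv, add_zero]
    · intro c u hu pu
      have e : T μ (T ν (c • u)) - q θ μ ν • T ν (T μ (c • u))
          - (b μ * T ν (c • u) - q θ μ ν • (b ν * T μ (c • u)))
          = c • (T μ (T ν u) - q θ μ ν • T ν (T μ u)
              - (b μ * T ν u - q θ μ ν • (b ν * T μ u))) := by
        simp only [map_smul, smul_sub, smul_smul, mul_smul_comm, mul_comm c (q θ μ ν)]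
      rw [e, pu, smul_zero]
  apply LinearMap.ext
  intro a
  simp only [LinearMap.sub_apply, LinearMap.comp_apply, LinearMap.smul_apply,
    LinearMap.mulLeft_apply]
  exact sub_eq_zero.mp (key a)

end Statement4
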